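/- Let μ, ν be finite positive measures on (Ω, F) with ν ≪ μ. Then the map π ↦ ∫_Ω e^{−f_π(μ)} dμ on finite measurable partitions of Ω is increasing with respect to refinement: if π' refines π, then ∫_Ω e^{−f_π(μ)} dμ ≤ ∫_Ω e^{−f_{π'}(μ)} dμ. -/

import Mathlib

open MeasureTheory Set
open scoped ENNReal Classical

/-- A finite measurable partition of `Ω`: a finite collection of pairwise disjoint measurable
sets whose union is `Ω`. -/
def IsFinitePartition {Ω : Type*} [MeasurableSpace Ω] (π : Finset (Set Ω)) : Prop :=
  (∀ A ∈ π, MeasurableSet A) ∧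
    (π : Set (Set Ω)).PairwiseDisjoint id ∧
    ⋃₀ (π : Set (Set Ω)) = Set.univ

/-- `π'` refines `π` if every element of `π` is a union of elements of `π'`. -/
def Refines {Ω : Type*} (π' π : Finset (Set Ω)) : Prop :=
  ∀ A ∈ π, ∃ S ⊆ π', A = ⋃₀ (S : Set (Set Ω))

/-- `f_π(μ) := Σ_{A ∈ π, μ(A) > 0} 1_A ⬝ ν(A)/μ(A)`. -/
noncomputable def partFn {Ω : Type*} [MeasurableSpace Ω] (ν lam : Measure Ω)
    (π : Finset (Set Ω)) (x : Ω) : ℝ :=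
  ∑ A ∈ π, if lam A ≠ 0 ∧ x ∈ A then (ν A).toReal / (lam A).toReal else 0

/-
This is Jensen's inequality for the convex function `t ↦ e^{-t}`, applied piece by piece.
On a piece `A` of `π`, `f_π` is the constant `ν(A)/μ(A)`, while the integral of `f_{π'}` over
`A` is at most `ν(A)`, since `A` is a union of pieces `B` of `π'` on each of which `f_{π'}`
integrates to `ν(B)` or to `0`. Hence
`∫_A e^{-f_{π'}} dμ ≥ μ(A) e^{-⨍_A f_{π'} dμ} ≥ μ(A) e^{-ν(A)/μ(A)} = ∫_A e^{-f_π} dμ`,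
and summing over `A ∈ π` gives the claim.
-/

theorem mul_exp_neg_div_le_setIntegral_exp_neg {α : Type*} [MeasurableSpace α]
    {μ : Measure α} {s : Set α} {f : α → ℝ} {d : ℝ} (hs : μ s ≠ ∞)
    (hf : IntegrableOn f s μ) (hexp : IntegrableOn (fun x => Real.exp (-f x)) s μ)
    (hfd : ∫ x in s, f x ∂μ ≤ d) :
    (μ s).toReal * Real.exp (-(d / (μ s).toReal)) ≤ ∫ x in s, Real.exp (-f x) ∂μ := by
  rcases eq_or_ne (μ s) 0 with h0 | h0
  · simp [h0, setIntegral_measure_zero _ h0]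
  have hm : 0 < (μ s).toReal := ENNReal.toReal_pos h0 hs
  have jensen : Real.exp (⨍ x in s, -f x ∂μ) ≤ ⨍ x in s, Real.exp (-f x) ∂μ :=
    convexOn_exp.map_set_average_le Real.continuous_exp.continuousOn isClosed_univ h0 hs
      (by simp) hf.neg hexp
  rw [setAverage_eq, setAverage_eq, integral_neg, measureReal_def, smul_eq_mul, smul_eq_mul,
    ← div_eq_inv_mul, ← div_eq_inv_mul, le_div_iff₀ hm] at jensen
  calc (μ s).toReal * Real.exp (-(d / (μ s).toReal))
      ≤ (μ s).toReal * Real.exp (-(∫ x in s, f x ∂μ) / (μ s).toReal) := by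
        gcongr
        rw [neg_div]
        exact neg_le_neg (div_le_div_of_nonneg_right hfd hm.le)
    _ ≤ ∫ x in s, Real.exp (-f x) ∂μ := by linarith

section PartFn

variable {Ω : Type*} [MeasurableSpace Ω] (μ ν : Measure Ω) {π : Finset (Set Ω)}

theorem partFn_eq_sum_indicator (π : Finset (Set Ω)) (x : Ω) :
    partFn ν μ π x = ∑ A ∈ π, A.indicator (fun _ => (ν A).toReal / (μ A).toReal) x := by
  refine Finset.sum_congr rfl fun A _ => ?_
  -- when `μ A = 0` the ratio is the junk value `x / 0 = 0`, so the guard `μ A ≠ 0` is harmless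
  by_cases h : μ A = 0 <;> simp [Set.indicator, h]

theorem partFn_nonneg (π : Finset (Set Ω)) (x : Ω) : 0 ≤ partFn ν μ π x :=
  Finset.sum_nonneg fun _ _ => by split_ifs <;> positivity

theorem measurable_partFn (hπ : ∀ A ∈ π, MeasurableSet A) : Measurable (partFn ν μ π) := by
  simp only [funext (partFn_eq_sum_indicator μ ν π)]
  exact Finset.measurable_sum _ fun A hA => measurable_const.indicator (hπ A hA)

theorem partFn_eq_of_mem (hπ : (π : Set (Set Ω)).PairwiseDisjoint id) {A : Set Ω} (hA : A ∈ π)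
    {x : Ω} (hx : x ∈ A) : partFn ν μ π x = (ν A).toReal / (μ A).toReal := by
  rw [partFn_eq_sum_indicator, Finset.sum_eq_single_of_mem A hA, indicator_of_mem hx]
  intro B hB hBA
  exact indicator_of_notMem (disjoint_left.1 (hπ hA hB hBA.symm) hx) _

theorem setIntegral_partFn_of_mem_le (hπ : IsFinitePartition π) {B : Set Ω} (hB : B ∈ π) :
    ∫ x in B, partFn ν μ π x ∂μ ≤ (ν B).toReal := by
  rw [setIntegral_congr_fun (hπ.1 B hB) fun x hx => partFn_eq_of_mem μ ν hπ.2.1 hB hx,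
    setIntegral_const, smul_eq_mul, measureReal_def]
  rcases eq_or_ne (μ B).toReal 0 with h0 | h0
  · simp [h0]
  · rw [mul_div_cancel₀ _ h0]

theorem integral_eq_sum_setIntegral (hπ : IsFinitePartition π) {f : Ω → ℝ}
    (hf : Integrable f μ) : ∫ x, f x ∂μ = ∑ A ∈ π, ∫ x in A, f x ∂μ := by
  rw [← setIntegral_univ, ← hπ.2.2, sUnion_eq_biUnion]
  exact integral_biUnion_finset π hπ.1 hπ.2.1 fun A _ => hf.integrableOn

variable [IsFiniteMeasure μ]

theorem integrable_partFn (hπ : ∀ A ∈ π, MeasurableSet A) : Integrable (partFn ν μ π) μ := by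
  simp only [funext (partFn_eq_sum_indicator μ ν π)]
  exact integrable_finsetSum _ fun A hA => (integrable_const _).indicator (hπ A hA)

theorem integrable_exp_neg_partFn (hπ : ∀ A ∈ π, MeasurableSet A) :
    Integrable (fun x => Real.exp (-partFn ν μ π x)) μ :=
  Integrable.of_bound (measurable_partFn μ ν hπ).neg.exp.aestronglyMeasurable 1 <|
    Filter.Eventually.of_forall fun x => by
      simpa [abs_of_pos (Real.exp_pos _)] using partFn_nonneg μ ν π x

variable [IsFiniteMeasure ν]

theorem setIntegral_partFn_sUnion_le (hπ : IsFinitePartition π) {S : Finset (Set Ω)}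
    (hS : S ⊆ π) :
    ∫ x in ⋃₀ (S : Set (Set Ω)), partFn ν μ π x ∂μ ≤ (ν (⋃₀ (S : Set (Set Ω)))).toReal := by
  have hmeas : ∀ B ∈ S, MeasurableSet B := fun B hB => hπ.1 B (hS hB)
  have hdisj : (S : Set (Set Ω)).PairwiseDisjoint id := hπ.2.1.subset (Finset.coe_subset.2 hS)
  rw [sUnion_eq_biUnion, Finset.set_biUnion_coe, integral_biUnion_finset S hmeas hdisj
      fun _ _ => (integrable_partFn μ ν hπ.1).integrableOn,
    measure_biUnion_finset (f := fun B => B) hdisj hmeas, ENNReal.toReal_sum fun B _ => measure_ne_top ν B]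
  exact Finset.sum_le_sum fun B hB => setIntegral_partFn_of_mem_le μ ν hπ (hS hB)

theorem setIntegral_exp_neg_partFn_le_of_refines {π' : Finset (Set Ω)}
    (hπ : IsFinitePartition π) (hπ' : IsFinitePartition π') (href : Refines π' π)
    {A : Set Ω} (hA : A ∈ π) :
    ∫ x in A, Real.exp (-partFn ν μ π x) ∂μ ≤ ∫ x in A, Real.exp (-partFn ν μ π' x) ∂μ := by
  obtain ⟨S, hS, rfl⟩ := href _ hA
  rw [setIntegral_congr_fun (hπ.1 _ hA) fun x hx => by rw [partFn_eq_of_mem μ ν hπ.2.1 hA hx],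
    setIntegral_const, smul_eq_mul, measureReal_def]
  exact mul_exp_neg_div_le_setIntegral_exp_neg (measure_ne_top μ _)
    (integrable_partFn μ ν hπ'.1).integrableOn (integrable_exp_neg_partFn μ ν hπ'.1).integrableOn
    (setIntegral_partFn_sUnion_le μ ν hπ' hS)

end PartFn

theorem stmt17_general {Ω : Type*} [MeasurableSpace Ω] (μ ν : Measure Ω)
    [IsFiniteMeasure μ] [IsFiniteMeasure ν]
    (π π' : Finset (Set Ω)) (hπ : IsFinitePartition π) (hπ' : IsFinitePartition π')
    (href : Refines π' π) :
    ∫ x, Real.exp (-(partFn ν μ π x)) ∂μ ≤ ∫ x, Real.exp (-(partFn ν μ π' x)) ∂μ := by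
  calc ∫ x, Real.exp (-(partFn ν μ π x)) ∂μ
      = ∑ A ∈ π, ∫ x in A, Real.exp (-partFn ν μ π x) ∂μ :=
        integral_eq_sum_setIntegral μ hπ (integrable_exp_neg_partFn μ ν hπ.1)
    _ ≤ ∑ A ∈ π, ∫ x in A, Real.exp (-partFn ν μ π' x) ∂μ :=
        Finset.sum_le_sum fun A hA =>
          setIntegral_exp_neg_partFn_le_of_refines μ ν hπ hπ' href hA
    _ = ∫ x, Real.exp (-(partFn ν μ π' x)) ∂μ :=
        (integral_eq_sum_setIntegral μ hπ (integrable_exp_neg_partFn μ ν hπ'.1)).symm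

/-- Let `μ, ν` be finite measures on `(Ω, F)` with `ν ≪ μ`. The map
`π ↦ ∫ e^{-f_π(μ)} dμ` on finite measurable partitions is increasing with respect to
refinement: if `π'` refines `π` then `∫ e^{-f_π(μ)} dμ ≤ ∫ e^{-f_{π'}(μ)} dμ`. -/
theorem stmt17 {Ω : Type*} [MeasurableSpace Ω] (μ ν : Measure Ω)
    [IsFiniteMeasure μ] [IsFiniteMeasure ν] (hac : ν ≪ μ)
    (π π' : Finset (Set Ω)) (hπ : IsFinitePartition π) (hπ' : IsFinitePartition π')
    (href : Refines π' π) :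
    ∫ x, Real.exp (-(partFn ν μ π x)) ∂μ ≤ ∫ x, Real.exp (-(partFn ν μ π' x)) ∂μ :=
  stmt17_general μ ν π π' hπ hπ' href
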